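/- arXiv:1403.0537 — 2 statements merged into one kernel-verified Lean document; each statement's English description precedes it below -/
import Mathlib

section
/- For 0 ≤ k < 1 and x ≥ 0, Ie(k,x) = (1/√(1-k²)) - (1/π)·∫₀^π e^{-x(1 - k·cosθ)}/(1 - k·cosθ) dθ. -/
open Real intervalIntegral

/-- Modified Bessel function of the first kind, order zero. -/
noncomputable def besselI0 (z : ℝ) : ℝ := ∑' n : ℕ, (z / 2) ^ (2 * n) / (n.factorial : ℝ) ^ 2

/-- Rice Ie-function. -/
noncomputable def riceIe (k x : ℝ) : ℝ := ∫ t in (0:ℝ)..x, Real.exp (-t) * besselI0 (k * t)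

/-!
Expanding `exp (z cos θ)` in powers of `cos θ` and integrating term by term (Wallis' integrals)
gives `I₀(z) = (1/π) ∫₀^π exp (z cos θ) dθ`. Substituting this into `Ie` and exchanging the order
of integration leaves the elementary inner integral `∫₀^x exp (-t a) dt = (1 - exp (-x a)) / a`
with `a = 1 - k cos θ > 0`, and the classical `∫₀^π dθ / (1 - k cos θ) = π / √(1 - k²)`,
computed with the half-angle substitution `u = tan (θ / 2)`.
-/

open MeasureTheory Filter Topology Set Nat

lemma integral_cos_pow_odd (n : ℕ) : ∫ θ in (0:ℝ)..π, cos θ ^ (2 * n + 1) = 0 := by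
  induction n with
  | zero => simp
  | succ n ih => rw [show 2 * (n + 1) + 1 = 2 * n + 1 + 2 by ring, integral_cos_pow, ih]; simp

lemma integral_cos_pow_even (n : ℕ) :
    ∫ θ in (0:ℝ)..π, cos θ ^ (2 * n) = π * (2 * n)! / (2 ^ (2 * n) * (n ! : ℝ) ^ 2) := by
  induction n with
  | zero => simp
  | succ n ih =>
    rw [mul_succ, integral_cos_pow, ih, show 2 * n + 2 = (2 * n + 1) + 1 by ring]
    push_cast [factorial_succ, pow_succ]
    simp only [sin_pi, sin_zero, mul_zero, sub_zero, zero_div, zero_add]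
    field_simp
    ring

lemma hasSum_besselI0 (z : ℝ) :
    HasSum (fun n : ℕ => (z / 2) ^ (2 * n) / (n ! : ℝ) ^ 2) (besselI0 z) := by
  refine Summable.hasSum <| Summable.of_nonneg_of_le (fun n => by rw [pow_mul]; positivity)
    (fun n => ?_) (Real.summable_pow_div_factorial ((z / 2) ^ 2))
  rw [pow_mul]
  exact div_le_div_of_nonneg_left (by positivity) (by positivity)
    (le_self_pow₀ (by exact_mod_cast n.factorial_pos) two_ne_zero)

lemma hasSum_integral_exp_mul_cos (z : ℝ) :
    HasSum (fun n : ℕ => z ^ n / n ! * ∫ θ in (0:ℝ)..π, cos θ ^ n)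
      (∫ θ in (0:ℝ)..π, exp (z * cos θ)) := by
  simp_rw [← intervalIntegral.integral_const_mul]
  refine hasSum_integral_of_dominated_convergence (fun n _ => |z| ^ n / n !)
    (fun n => by fun_prop) (fun n => ae_of_all _ fun θ _ => ?_)
    (ae_of_all _ fun _ _ => Real.summable_pow_div_factorial |z|) intervalIntegrable_const
    (ae_of_all _ fun θ _ => ?_)
  · rw [norm_mul, norm_div, norm_pow, norm_pow, Real.norm_natCast, Real.norm_eq_abs]
    exact mul_le_of_le_one_right (by positivity)
      (pow_le_one₀ (norm_nonneg _) (abs_cos_le_one θ))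
  · simpa [Real.exp_eq_exp_ℝ, mul_pow, div_mul_eq_mul_div] using
      NormedSpace.expSeries_div_hasSum_exp (z * cos θ)

theorem besselI0_eq_integral (z : ℝ) :
    besselI0 z = 1 / π * ∫ θ in (0:ℝ)..π, exp (z * cos θ) := by
  have h_even (n : ℕ) : z ^ (2 * n) / (2 * n)! * ∫ θ in (0:ℝ)..π, cos θ ^ (2 * n) =
      π * ((z / 2) ^ (2 * n) / (n ! : ℝ) ^ 2) := by
    rw [integral_cos_pow_even, div_pow]
    field_simp
  have h_odd (n : ℕ) :
      z ^ (2 * n + 1) / (2 * n + 1)! * ∫ θ in (0:ℝ)..π, cos θ ^ (2 * n + 1) = 0 := by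
    rw [integral_cos_pow_odd, mul_zero]
  have h_sum : HasSum (fun n : ℕ => z ^ n / n ! * ∫ θ in (0:ℝ)..π, cos θ ^ n)
      (π * besselI0 z + 0) :=
    .even_add_odd (by simpa only [h_even] using (hasSum_besselI0 z).mul_left π)
      (by simpa only [h_odd] using hasSum_zero)
  rw [(hasSum_integral_exp_mul_cos z).unique h_sum, add_zero, one_div,
    inv_mul_cancel_left₀ pi_ne_zero]

lemma one_sub_mul_cos_pos {k : ℝ} (hk : |k| < 1) (θ : ℝ) : 0 < 1 - k * cos θ := by
  have : k * cos θ ≤ |k| := by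
    calc k * cos θ ≤ |k * cos θ| := le_abs_self _
      _ = |k| * |cos θ| := abs_mul _ _
      _ ≤ |k| := mul_le_of_le_one_right (abs_nonneg k) (abs_cos_le_one θ)
  linarith

lemma sqrt_div_one_sub_mul_one_sub {k : ℝ} (hk : k < 1) :
    √((1 + k) / (1 - k)) * (1 - k) = √(1 - k ^ 2) := by
  have hk' : 0 < 1 - k := by linarith
  rw [← sqrt_sq hk'.le, ← sqrt_mul' _ (sq_nonneg _), sqrt_sq hk'.le]
  congr 1
  field_simp
  ring

lemma hasDerivAt_arctan_mul_tan_half {k θ : ℝ} (hk : |k| < 1) (hθ : |θ| < π) :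
    HasDerivAt (fun θ => 2 / √(1 - k ^ 2) * arctan (√((1 + k) / (1 - k)) * tan (θ / 2)))
      (1 / (1 - k * cos θ)) θ := by
  obtain ⟨hk₀, hk₁⟩ := abs_lt.1 hk
  set c := √((1 + k) / (1 - k))
  have hc : c ^ 2 = (1 + k) / (1 - k) := sq_sqrt (div_nonneg (by linarith) (by linarith))
  have hcos : cos (θ / 2) ≠ 0 := (cos_pos_of_mem_Ioo ⟨by linarith [(abs_lt.1 hθ).1],
    by linarith [(abs_lt.1 hθ).2]⟩).ne'
  have h_tan : HasDerivAt (fun θ => c * tan (θ / 2)) (c * (1 / cos (θ / 2) ^ 2 * (1 / 2))) θ :=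
    (HasDerivAt.comp θ (Real.hasDerivAt_tan hcos) ((hasDerivAt_id' θ).div_const 2)).const_mul c
  have h_den : 1 + (c * tan (θ / 2)) ^ 2 = (1 - k * cos θ) / ((1 - k) * cos (θ / 2) ^ 2) := by
    rw [tan_eq_sin_div_cos, mul_pow, hc, div_pow, sin_sq,
      show cos θ = 2 * cos (θ / 2) ^ 2 - 1 by rw [← cos_two_mul]; ring_nf]
    field_simp
    ring
  refine (((hasDerivAt_arctan _).comp θ h_tan).const_mul _).congr_deriv ?_
  have hcs : c * (1 - k) = √(1 - k ^ 2) := sqrt_div_one_sub_mul_one_sub hk₁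
  rw [h_den, ← hcs]
  have := one_sub_mul_cos_pos hk θ
  have : 0 < c := sqrt_pos.2 (div_pos (by linarith) (by linarith))
  field_simp

theorem integral_one_div_one_sub_mul_cos {k : ℝ} (hk : |k| < 1) :
    ∫ θ in (0:ℝ)..π, 1 / (1 - k * cos θ) = π / √(1 - k ^ 2) := by
  set F := fun θ => 2 / √(1 - k ^ 2) * arctan (√((1 + k) / (1 - k)) * tan (θ / 2))
  have h_deriv (θ : ℝ) (hθ : θ ∈ Ioo 0 π) : HasDerivAt F (1 / (1 - k * cos θ)) θ :=
    hasDerivAt_arctan_mul_tan_half hk (abs_lt.2 ⟨by linarith [hθ.1, pi_pos], hθ.2⟩)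
  have h_zero : Tendsto F (𝓝[>] 0) (𝓝 0) := by
    have := (hasDerivAt_arctan_mul_tan_half (θ := 0) hk (by simpa using pi_pos)).continuousAt
    simpa [F] using this.tendsto.mono_left nhdsWithin_le_nhds
  -- `F` is a primitive only on `(-π, π)`: `tan (θ / 2)` blows up at `θ = π`.
  have h_pi : Tendsto F (𝓝[<] π) (𝓝 (π / √(1 - k ^ 2))) := by
    have h_half : Tendsto (fun θ : ℝ => θ / 2) (𝓝[<] π) (𝓝[<] (π / 2)) :=
      tendsto_nhdsWithin_of_tendsto_nhds_of_eventually_within _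
        ((continuous_id.div_const 2).tendsto' π _ rfl |>.mono_left nhdsWithin_le_nhds)
        (eventually_nhdsWithin_of_forall fun θ (hθ : θ < π) => by simp only [mem_Iio]; linarith)
    obtain ⟨hk₀, hk₁⟩ := abs_lt.1 hk
    have hc : 0 < √((1 + k) / (1 - k)) := sqrt_pos.2 (div_pos (by linarith) (by linarith))
    have h_arctan := (tendsto_arctan_atTop.mono_right nhdsWithin_le_nhds).comp
      ((tendsto_tan_pi_div_two.comp h_half).const_mul_atTop hc)
    rw [show π / √(1 - k ^ 2) = 2 / √(1 - k ^ 2) * (π / 2) by ring]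
    exact h_arctan.const_mul _
  have h_int : IntervalIntegrable (fun θ => 1 / (1 - k * cos θ)) volume 0 π :=
    Continuous.intervalIntegrable
      (continuous_const.div (by fun_prop) fun θ => (one_sub_mul_cos_pos hk θ).ne') _ _
  rw [integral_eq_sub_of_hasDerivAt_of_tendsto pi_pos h_deriv h_int h_zero h_pi, sub_zero]

lemma integral_exp_neg_mul {a : ℝ} (ha : a ≠ 0) (x : ℝ) :
    ∫ t in (0:ℝ)..x, exp (-t * a) = 1 / a - exp (-x * a) / a := by
  simp_rw [neg_mul, ← mul_neg]
  rw [integral_comp_mul_right exp (neg_ne_zero.2 ha), integral_exp, smul_eq_mul, zero_mul,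
    exp_zero]
  field_simp
  ring

lemma intervalIntegral_intervalIntegral_swap_of_continuous {E : Type*} [NormedAddCommGroup E]
    [NormedSpace ℝ E] {F : ℝ → ℝ → E} (hF : Continuous F.uncurry) (a b c d : ℝ) :
    ∫ x in a..b, ∫ y in c..d, F x y = ∫ y in c..d, ∫ x in a..b, F x y :=
  intervalIntegral_intervalIntegral_swap <|
    (hF.continuousOn.integrableOn_compact (isCompact_uIcc.prod isCompact_uIcc)).mono_set
      (prod_mono uIoc_subset_uIcc uIoc_subset_uIcc)

lemma exp_neg_mul_besselI0_eq_integral (k t : ℝ) :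
    exp (-t) * besselI0 (k * t) = 1 / π * ∫ θ in (0:ℝ)..π, exp (-t * (1 - k * cos θ)) := by
  rw [besselI0_eq_integral, mul_left_comm, ← intervalIntegral.integral_const_mul]
  congr! 1
  exact integral_congr fun θ _ => by rw [← exp_add]; ring_nf

theorem rice_Ie_eq_integral_general (k x : ℝ) (hk0 : 0 ≤ k) (hk1 : k < 1) :
    riceIe k x =
      1 / Real.sqrt (1 - k ^ 2) -
        (1 / π) * ∫ θ in (0:ℝ)..π,
          Real.exp (-x * (1 - k * Real.cos θ)) / (1 - k * Real.cos θ) := by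
  have hk : |k| < 1 := abs_lt.2 ⟨by linarith, hk1⟩
  have h_pos := one_sub_mul_cos_pos hk
  have h_inner (θ : ℝ) := integral_exp_neg_mul (h_pos θ).ne' x
  calc riceIe k x
      = 1 / π * ∫ θ in (0:ℝ)..π, ∫ t in (0:ℝ)..x, exp (-t * (1 - k * cos θ)) := by
        simp_rw [riceIe, exp_neg_mul_besselI0_eq_integral, intervalIntegral.integral_const_mul]
        rw [intervalIntegral_intervalIntegral_swap_of_continuous (by fun_prop)]
    _ = 1 / π * ((∫ θ in (0:ℝ)..π, 1 / (1 - k * cos θ)) -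
          ∫ θ in (0:ℝ)..π, exp (-x * (1 - k * cos θ)) / (1 - k * cos θ)) := by
        simp_rw [h_inner]
        rw [intervalIntegral.integral_sub] <;>
          exact Continuous.intervalIntegrable
            (Continuous.div (by fun_prop) (by fun_prop) fun θ => (h_pos θ).ne') _ _
    _ = _ := by
        rw [integral_one_div_one_sub_mul_cos hk, mul_sub]
        field_simp

theorem rice_Ie_eq_integral (k x : ℝ) (hk0 : 0 ≤ k) (hk1 : k < 1) (hx : 0 ≤ x) :
    riceIe k x =
      1 / Real.sqrt (1 - k ^ 2) -
        (1 / π) * ∫ θ in (0:ℝ)..π,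
          Real.exp (-x * (1 - k * Real.cos θ)) / (1 - k * Real.cos θ) :=
  rice_Ie_eq_integral_general k x hk0 hk1
end

section
/- Let X be squared-Hoyt distributed with mean γ̄ and parameter q ∈ (0,1], and let Y ≥ 0 be an independent nonnegative random variable with moment generating function φ_Y(s) = E[e^{sY}], finite for s ≤ 0. Then for γₒ > 0, P(X < γₒ·(Y+1)) = 1 - (1/π)·∫₀^π e^{-γₒ/γ(θ,q)}·φ_Y(-γₒ/γ(θ,q)) dθ, where γ(θ,q) = γ̄·(1 - ((1-q²)/(1+q²))·cosθ). -/
open Real MeasureTheory ProbabilityTheory intervalIntegral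

/-!
Conditioning on `Y`, independence gives `P(X < γₒ(Y + 1)) = E[F(γₒ(Y + 1))]` with `F(a) = P(X < a)`,
and `F(a) = P(X ≤ a)` for `a > 0` because the given CDF is continuous. That CDF is `1` minus the
`θ`-average of `exp(-a / γ(θ, q))`; as `Y ≥ 0` the integrand `exp(-γₒ(Y + 1) / γ(θ, q))` is bounded
by `1`, so Fubini swaps the expectation and the `θ`-integral, and for fixed `θ` the expectation is
`e^{-γₒ/γ(θ,q)} φ_Y(-γₒ/γ(θ,q))`.
-/

open Set Filter Topology

lemma measureReal_Iio_eq_of_continuousWithinAt {μ : Measure ℝ} [IsProbabilityMeasure μ]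
    {F : ℝ → ℝ} {a : ℝ} (hF : ContinuousWithinAt F (Iic a) a)
    (hμF : ∀ᶠ x in 𝓝[≤] a, μ.real (Iic x) = F x) :
    μ.real (Iio a) = F a := by
  have hcdf : cdf μ =ᶠ[𝓝[≤] a] F := hμF.mono fun x hx => (cdf_eq_real μ x).trans hx
  have hleft : Function.leftLim (cdf μ) a = cdf μ a :=
    (monotone_cdf μ).continuousWithinAt_Iio_iff_leftLim_eq.1 <|
      (hF.congr_of_eventuallyEq hcdf (hcdf.eq_of_nhdsWithin self_mem_Iic)).mono
        Iio_subset_Iic_self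
  rw [← measure_cdf μ, measureReal_def, (cdf μ).measure_Iio (tendsto_cdf_atBot μ), sub_zero,
    hleft, ENNReal.toReal_ofReal (cdf_nonneg μ a), hcdf.eq_of_nhdsWithin self_mem_Iic]

lemma ProbabilityTheory.IndepFun.measureReal_lt_comp_eq_integral {Ω β : Type*}
    [MeasurableSpace Ω] [MeasurableSpace β] {P : Measure Ω} [IsProbabilityMeasure P]
    {X : Ω → ℝ} {Y : Ω → β} (hXY : IndepFun X Y P) (hX : Measurable X) (hY : Measurable Y)
    {h : β → ℝ} (hh : Measurable h) :
    P.real {ω | X ω < h (Y ω)} = ∫ ω, (P.map X).real (Iio (h (Y ω))) ∂P := by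
  have hS : MeasurableSet {p : β × ℝ | p.2 < h p.1} :=
    measurableSet_lt measurable_snd (hh.comp measurable_fst)
  have hjoint : P.map (fun ω => (Y ω, X ω)) = (P.map Y).prod (P.map X) :=
    (indepFun_iff_map_prod_eq_prod_map_map hY.aemeasurable hX.aemeasurable).mp hXY.symm
  have hcond : P {ω | X ω < h (Y ω)} = ∫⁻ y, (P.map X) (Iio (h y)) ∂(P.map Y) := by
    rw [show {ω | X ω < h (Y ω)} = (fun ω => (Y ω, X ω)) ⁻¹' {p | p.2 < h p.1} from rfl,
      ← Measure.map_apply (hY.prodMk hX) hS, hjoint, Measure.prod_apply hS]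
    rfl
  have hmeas : Measurable fun y => (P.map X) (Iio (h y)) := measurable_measure_prodMk_left hS
  rw [measureReal_def, hcond,
    ← integral_toReal hmeas.aemeasurable (.of_forall fun _ => measure_lt_top _ _),
    integral_map hY.aemeasurable hmeas.ennreal_toReal.aestronglyMeasurable]
  rfl

section MixtureMGF

variable {Ω Θ : Type*} [MeasurableSpace Ω] [MeasurableSpace Θ] {P : Measure Ω} {ν : Measure Θ}
  [IsFiniteMeasure P] [IsFiniteMeasure ν] {Y : Ω → ℝ} {s : Θ → ℝ}

lemma integrable_exp_mul_add_one_prod (hY : Measurable Y) (hY0 : ∀ ω, 0 ≤ Y ω)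
    (hs : Measurable s) (hs0 : ∀ θ, s θ ≤ 0) :
    Integrable (fun p : Ω × Θ => exp (s p.2 * (Y p.1 + 1))) (P.prod ν) := by
  refine Integrable.mono' (integrable_const 1) (by fun_prop) (.of_forall fun p => ?_)
  rw [norm_of_nonneg (exp_nonneg _), exp_le_one_iff]
  exact mul_nonpos_of_nonpos_of_nonneg (hs0 p.2) (by linarith [hY0 p.1])

lemma integral_integral_exp_mul_add_one (hY : Measurable Y) (hY0 : ∀ ω, 0 ≤ Y ω)
    (hs : Measurable s) (hs0 : ∀ θ, s θ ≤ 0) :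
    ∫ ω, ∫ θ, exp (s θ * (Y ω + 1)) ∂ν ∂P = ∫ θ, exp (s θ) * mgf Y P (s θ) ∂ν := by
  rw [integral_integral_swap (integrable_exp_mul_add_one_prod hY hY0 hs hs0)]
  refine integral_congr_ae (.of_forall fun θ => ?_)
  change mgf (fun ω => Y ω + 1) P (s θ) = _
  rw [mgf_add_const, mul_one, mul_comm]

end MixtureMGF

/-- The paper's `γ(θ, q)`. -/
noncomputable def hoytScale (γbar q θ : ℝ) : ℝ := γbar * (1 - (1 - q ^ 2) / (1 + q ^ 2) * cos θ)

lemma hoytScale_pos {γbar q : ℝ} (hγ : 0 < γbar) (hq : q ≠ 0) (θ : ℝ) :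
    0 < hoytScale γbar q θ := by
  have hden : 0 < 1 + q ^ 2 := by positivity
  have hcoef : |(1 - q ^ 2) / (1 + q ^ 2)| < 1 := by
    rw [abs_div, abs_of_pos hden, div_lt_one hden, abs_lt]
    constructor <;> nlinarith [pow_pos (abs_pos.mpr hq) 2, sq_abs q]
  have hcos : (1 - q ^ 2) / (1 + q ^ 2) * cos θ < 1 := calc
    _ ≤ |(1 - q ^ 2) / (1 + q ^ 2)| * |cos θ| := (le_abs_self _).trans_eq (abs_mul _ _)
    _ ≤ |(1 - q ^ 2) / (1 + q ^ 2)| := mul_le_of_le_one_right (abs_nonneg _) (abs_cos_le_one θ)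
    _ < 1 := hcoef
  exact mul_pos hγ (sub_pos.mpr hcos)

lemma continuous_hoytScale (γbar q : ℝ) : Continuous (hoytScale γbar q) := by
  unfold hoytScale; fun_prop

lemma continuous_intervalIntegral_exp_neg_div_hoytScale {γbar q : ℝ} (hγ : 0 < γbar)
    (hq : q ≠ 0) : Continuous fun a => ∫ θ in (0:ℝ)..π, exp (-a / hoytScale γbar q θ) := by
  apply continuous_parametric_intervalIntegral_of_continuous'
  exact continuous_exp.comp <| continuous_fst.neg.div
    ((continuous_hoytScale γbar q).comp continuous_snd) fun p => (hoytScale_pos hγ hq p.2).ne'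

theorem outage_interference_noise_general
    {Ω : Type*} [MeasurableSpace Ω] (P : Measure Ω) [IsProbabilityMeasure P]
    (X Y : Ω → ℝ) (hmX : Measurable X) (hmY : Measurable Y)
    (hindep : IndepFun X Y P)
    (γbar q γo : ℝ) (hγ : 0 < γbar) (hq0 : 0 < q) (ho : 0 < γo)
    (hYpos : ∀ ω, 0 ≤ Y ω)
    (hXcdf : ∀ a : ℝ, 0 ≤ a → (P {ω | X ω ≤ a}).toReal =
      1 - (1 / π) * ∫ θ in (0:ℝ)..π,
        Real.exp (-a / (γbar * (1 - (1 - q ^ 2) / (1 + q ^ 2) * Real.cos θ)))) :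
    (P {ω | X ω < γo * (Y ω + 1)}).toReal =
      1 - (1 / π) * ∫ θ in (0:ℝ)..π,
        Real.exp (-γo / (γbar * (1 - (1 - q ^ 2) / (1 + q ^ 2) * Real.cos θ))) *
          mgf Y P (-γo / (γbar * (1 - (1 - q ^ 2) / (1 + q ^ 2) * Real.cos θ))) := by
  change P.real _ = 1 - (1 / π) * ∫ θ in (0:ℝ)..π,
    exp (-γo / hoytScale γbar q θ) * mgf Y P (-γo / hoytScale γbar q θ)
  set F : ℝ → ℝ := fun a => 1 - (1 / π) * ∫ θ in (0:ℝ)..π, exp (-a / hoytScale γbar q θ)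
  have hF : Continuous F := continuous_const.sub <|
    continuous_const.mul (continuous_intervalIntegral_exp_neg_div_hoytScale hγ hq0.ne')
  have := Measure.isProbabilityMeasure_map (μ := P) hmX.aemeasurable
  have hXlt (a : ℝ) (ha : 0 < a) : (P.map X).real (Iio a) = F a :=
    measureReal_Iio_eq_of_continuousWithinAt hF.continuousWithinAt <|
      eventually_nhdsWithin_of_eventually_nhds <| (eventually_ge_nhds ha).mono fun x hx => by
        rw [map_measureReal_apply hmX measurableSet_Iic]; exact hXcdf x hx
  set s : ℝ → ℝ := fun θ => -γo / hoytScale γbar q θ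
  have hs : Measurable s := (continuous_const.div (continuous_hoytScale γbar q)
    fun θ => (hoytScale_pos hγ hq0.ne' θ).ne').measurable
  have hs0 (θ : ℝ) : s θ ≤ 0 :=
    div_nonpos_of_nonpos_of_nonneg (by linarith) (hoytScale_pos hγ hq0.ne' θ).le
  have hF_eq (y : ℝ) : F (γo * (y + 1)) = 1 - (1 / π) * ∫ θ in Ioc 0 π, exp (s θ * (y + 1)) := by
    simp only [F, s, integral_of_le pi_pos.le, neg_div, neg_mul, mul_div_right_comm]
  calc P.real {ω | X ω < γo * (Y ω + 1)}
      = ∫ ω, F (γo * (Y ω + 1)) ∂P := by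
        rw [hindep.measureReal_lt_comp_eq_integral hmX hmY (h := fun y => γo * (y + 1))
          (by fun_prop)]
        exact integral_congr_ae (.of_forall fun ω => hXlt _ (by have := hYpos ω; positivity))
    _ = 1 - (1 / π) * ∫ ω, (∫ θ in Ioc 0 π, exp (s θ * (Y ω + 1))) ∂P := by
        simp only [hF_eq]
        rw [integral_sub (integrable_const 1), MeasureTheory.integral_const_mul]
        · simp
        · exact (integrable_exp_mul_add_one_prod hmY hYpos hs hs0).integral_prod_left.const_mul _
    _ = _ := by rw [integral_integral_exp_mul_add_one hmY hYpos hs hs0, integral_of_le pi_pos.le]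

theorem outage_interference_noise
    {Ω : Type*} [MeasurableSpace Ω] (P : Measure Ω) [IsProbabilityMeasure P]
    (X Y : Ω → ℝ) (hmX : Measurable X) (hmY : Measurable Y)
    (hindep : IndepFun X Y P)
    (γbar q γo : ℝ) (hγ : 0 < γbar) (hq0 : 0 < q) (hq1 : q ≤ 1) (ho : 0 < γo)
    (hXpos : ∀ ω, 0 ≤ X ω) (hYpos : ∀ ω, 0 ≤ Y ω)
    (hXcdf : ∀ a : ℝ, 0 ≤ a → (P {ω | X ω ≤ a}).toReal =
      1 - (1 / π) * ∫ θ in (0:ℝ)..π,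
        Real.exp (-a / (γbar * (1 - (1 - q ^ 2) / (1 + q ^ 2) * Real.cos θ))))
    (hmgf : ∀ s : ℝ, s ≤ 0 → Integrable (fun ω => Real.exp (s * Y ω)) P) :
    (P {ω | X ω < γo * (Y ω + 1)}).toReal =
      1 - (1 / π) * ∫ θ in (0:ℝ)..π,
        Real.exp (-γo / (γbar * (1 - (1 - q ^ 2) / (1 + q ^ 2) * Real.cos θ))) *
          mgf Y P (-γo / (γbar * (1 - (1 - q ^ 2) / (1 + q ^ 2) * Real.cos θ))) :=
  outage_interference_noise_general P X Y hmX hmY hindep γbar q γo hγ hq0 ho hYpos hXcdf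
end
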